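/- Let t ∈ (0, 1) be real, let n ≥ 1, and let w : ℕ → ℝ satisfy w_0 = 0 and w_s = 0 for all s > n. If ∑_{r=1}^n ∑_{s=1}^n r·C(r+s−1, r)·w_r·w_s·t^{r+s} = 0, then w_s = 0 for all s. That is, the quadratic form with kernel K_{r,s} = r·C(r+s−1, r)·t^{r+s} (r, s ≥ 1) is positive definite on finitely supported real sequences. -/

import Mathlib

/-!
Since `j * C(r, j) = r * C(r - 1, j - 1)`, Vandermonde's identity gives the Gram decomposition
`r * C(r + s - 1, r) = ∑_j j * C(r, j) * C(s, j)`. Hence the quadratic form equals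
`∑_j j * S_j ^ 2` with `S_j = ∑_r C(r, j) * w_r * t ^ r`, and its vanishing forces `S_j = 0`
for `1 ≤ j ≤ n`. The system `S_j = 0` is triangular with unit diagonal in the unknowns
`w_r * t ^ r`, so all of them vanish, and `t ≠ 0` gives `w = 0`.
-/

open Finset

theorem Nat.mul_choose_add_sub_one_eq_sum (r s : ℕ) :
    r * (r + s - 1).choose r = ∑ j ∈ range (r + 1), j * r.choose j * s.choose j := by
  cases r with
  | zero => simp
  | succ a =>
    rw [show a + 1 + s - 1 = s + a by omega, Nat.add_choose_eq,
      Nat.sum_antidiagonal_eq_sum_range_succ (fun p q => s.choose p * a.choose q), mul_sum]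
    refine sum_congr rfl fun j hj => ?_
    cases j with
    | zero => simp
    | succ i =>
      have hi : i ≤ a := by simp only [mem_range] at hj; omega
      rw [show a + 1 - (i + 1) = a - i by omega, Nat.choose_symm hi,
        mul_left_comm, Nat.add_one_mul_choose_eq]
      ring

theorem Nat.mul_choose_add_sub_one_eq_sum_of_le {r n : ℕ} (hr : r ≤ n) (s : ℕ) :
    r * (r + s - 1).choose r = ∑ j ∈ range (n + 1), j * r.choose j * s.choose j := by
  rw [Nat.mul_choose_add_sub_one_eq_sum]
  refine sum_subset (range_subset_range.mpr (by omega)) fun j _ hj => ?_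
  rw [Nat.choose_eq_zero_of_lt (by simpa using hj), mul_zero, zero_mul]

theorem Finset.sum_sum_mul_eq_sum_mul_sq {ι κ R : Type*} [CommSemiring R] (I : Finset ι)
    (J : Finset κ) (K : ι → ι → R) (c : κ → R) (a : κ → ι → R)
    (hK : ∀ r ∈ I, ∀ s ∈ I, K r s = ∑ j ∈ J, c j * a j r * a j s) (x : ι → R) :
    ∑ r ∈ I, ∑ s ∈ I, K r s * x r * x s = ∑ j ∈ J, c j * (∑ r ∈ I, a j r * x r) ^ 2 := by
  calc ∑ r ∈ I, ∑ s ∈ I, K r s * x r * x s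
      = ∑ r ∈ I, ∑ s ∈ I, ∑ j ∈ J, c j * (a j r * x r) * (a j s * x s) := by
        refine sum_congr rfl fun r hr => sum_congr rfl fun s hs => ?_
        rw [hK r hr s hs, sum_mul, sum_mul]
        exact sum_congr rfl fun j _ => by ring
    _ = ∑ j ∈ J, ∑ r ∈ I, ∑ s ∈ I, c j * (a j r * x r) * (a j s * x s) := by
        exact (sum_congr rfl fun _ _ => sum_comm).trans sum_comm
    _ = ∑ j ∈ J, c j * (∑ r ∈ I, a j r * x r) ^ 2 := by
        refine sum_congr rfl fun j _ => ?_
        rw [sq, sum_mul_sum, mul_sum]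
        exact sum_congr rfl fun r _ => by rw [mul_sum]; exact sum_congr rfl fun s _ => by ring

theorem eq_zero_of_sum_choose_mul_eq_zero {R : Type*} [Semiring R] {n : ℕ} {v : ℕ → R}
    (h : ∀ j ∈ Icc 1 n, ∑ r ∈ Icc 1 n, (r.choose j : R) * v r = 0) :
    ∀ r ∈ Icc 1 n, v r = 0 := by
  suffices key : ∀ d, ∀ r ∈ Icc 1 n, n < r + d → v r = 0 by
    intro r hr
    exact key n r hr (by have := (mem_Icc.mp hr).1; omega)
  intro d
  induction d with
  | zero => intro r hr hrn; have := (mem_Icc.mp hr).2; omega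
  | succ d ih =>
    intro r hr_mem hr
    by_cases hrd : n < r + d
    · exact ih r hr_mem hrd
    have hsingle : ∑ r' ∈ Icc 1 n, (r'.choose r : R) * v r' = v r := by
      rw [sum_eq_single_of_mem r hr_mem, Nat.choose_self, Nat.cast_one, one_mul]
      intro r' hr' hne
      rcases lt_or_gt_of_ne hne with hlt | hgt
      · rw [Nat.choose_eq_zero_of_lt hlt, Nat.cast_zero, zero_mul]
      · rw [ih r' hr' (by omega), mul_zero]
    rw [← hsingle]
    exact h r hr_mem

theorem stmt_12 (t : ℝ) (ht0 : 0 < t) (n : ℕ) (w : ℕ → ℝ)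
    (hw0 : w 0 = 0) (hwn : ∀ s : ℕ, n < s → w s = 0)
    (h : (∑ r ∈ Finset.Icc 1 n, ∑ s ∈ Finset.Icc 1 n,
        (r : ℝ) * (Nat.choose (r + s - 1) r : ℝ) * w r * w s * t ^ (r + s)) = 0) :
    ∀ s : ℕ, w s = 0 := by
  set S : ℕ → ℝ := fun j => ∑ r ∈ Icc 1 n, (r.choose j : ℝ) * (w r * t ^ r)
  have hform : ∑ j ∈ range (n + 1), (j : ℝ) * S j ^ 2 = 0 := by
    rw [← h, ← sum_sum_mul_eq_sum_mul_sq _ _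
      (fun r s : ℕ => (r : ℝ) * ((r + s - 1).choose r : ℝ))]
    · exact sum_congr rfl fun r _ => sum_congr rfl fun s _ => by ring
    · intro r hr s _
      exact_mod_cast Nat.mul_choose_add_sub_one_eq_sum_of_le (mem_Icc.mp hr).2 s
  have hS : ∀ j ∈ Icc 1 n, S j = 0 := by
    intro j hj
    have hj' := mem_Icc.mp hj
    have := (sum_eq_zero_iff_of_nonneg (fun i _ => by positivity)).mp hform j
      (mem_range.mpr (by omega))
    simpa [show j ≠ 0 by omega] using this
  have hwt := eq_zero_of_sum_choose_mul_eq_zero hS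
  intro s
  rcases Nat.eq_zero_or_pos s with rfl | hs0
  · exact hw0
  by_cases hsn : n < s
  · exact hwn s hsn
  exact (mul_eq_zero.mp (hwt s (mem_Icc.mpr ⟨hs0, by omega⟩))).resolve_right (by positivity)
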